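/- arXiv:2305.08951 — 2 statements merged into one kernel-verified Lean document; each statement's English description precedes it below -/
import Mathlib

section
/- Let d(s) = exp(s·G_d) be a linear continuous dilation in ℝⁿ that is monotone with respect to a norm ‖·‖ on ℝⁿ. Then: (i) for every x ≠ 0 there exists a unique s_x ∈ ℝ such that ‖d(−s_x)x‖ = 1, so the canonical homogeneous norm ‖x‖_d := e^{s_x} for x ≠ 0, ‖0‖_d := 0, is a well-defined single-valued function; (ii) ‖·‖_d is continuous on ℝⁿ; (iii) there exist functions σ₁, σ₂ of class K_∞ such that σ₁(‖x‖_d) ≤ ‖x‖ ≤ σ₂(‖x‖_d) for all x ∈ ℝⁿ. -/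
/-!
The map `s ↦ N (d(s) x)` is continuous, strictly increasing and runs from `0` to `∞`, so it
takes the value `1` exactly once. For the canonical homogeneous norm `hd`, monotonicity gives
`hd x < exp t ↔ N (d(-t) x) < 1` and `exp t < hd x ↔ 1 < N (d(-t) x)`, so the strict sub- and
superlevel sets of `hd` are open and `hd` is continuous.

For the bounds let `ψ(t) = ∑ᵢ N (d(t) eᵢ)`, so that `N (d(t) x) ≤ ‖x‖ ψ(t)` for the sup norm,
and let `‖y‖ ≤ K N y`. With `s = log (hd x)` and `y = d(-s) x`, so that `N y = 1`, we get
`N x = N (d(s) y) ≤ K ψ(s)` and `1 = N y ≤ K ψ(-s) N x`. Since `ψ` is continuous, strictly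
increasing, tends to `0` at `-∞` and to `∞` at `+∞`, both `r ↦ K ψ(log r)` and
`r ↦ (K ψ(-log r))⁻¹` are of class `K_∞`.
-/

open Matrix Filter Topology Set

/-- The linear continuous group `d(s) = exp (s • G)` generated by `G`. -/
noncomputable def dilMat {n : ℕ} (G : Matrix (Fin n) (Fin n) ℝ) (s : ℝ) :
    Matrix (Fin n) (Fin n) ℝ := NormedSpace.exp (s • G)

/-- `N` is a norm on `ℝⁿ`. -/
def IsNorm {n : ℕ} (N : (Fin n → ℝ) → ℝ) : Prop :=
  (∀ x y : Fin n → ℝ, N (x + y) ≤ N x + N y) ∧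
  (∀ (c : ℝ) (x : Fin n → ℝ), N (c • x) = |c| * N x) ∧
  (∀ x : Fin n → ℝ, N x = 0 ↔ x = 0)

/-- `d(s) = exp (s G)` is a dilation with respect to the norm `N`:
`liminf_{s→∞} ‖d(s)x‖ = ∞` and `limsup_{s→-∞} ‖d(s)x‖ = 0` for every `x ≠ 0`. -/
def IsDilation {n : ℕ} (G : Matrix (Fin n) (Fin n) ℝ) (N : (Fin n → ℝ) → ℝ) : Prop :=
  ∀ x : Fin n → ℝ, x ≠ 0 →
    Tendsto (fun s : ℝ => N (dilMat G s *ᵥ x)) atTop atTop ∧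
    Tendsto (fun s : ℝ => N (dilMat G s *ᵥ x)) atBot (𝓝 0)

/-- The dilation is monotone with respect to `N`: `s ↦ ‖d(s)x‖` is strictly increasing. -/
def IsMonotoneDil {n : ℕ} (G : Matrix (Fin n) (Fin n) ℝ) (N : (Fin n → ℝ) → ℝ) : Prop :=
  ∀ x : Fin n → ℝ, x ≠ 0 → StrictMono fun s : ℝ => N (dilMat G s *ᵥ x)

/-- A class `K_∞` function: continuous, strictly increasing on `[0,∞)`, vanishing at `0`,
and tending to `+∞`. -/
def IsClassKInf (σ : ℝ → ℝ) : Prop :=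
  ContinuousOn σ (Set.Ici 0) ∧ StrictMonoOn σ (Set.Ici 0) ∧ σ 0 = 0 ∧
    Tendsto σ atTop atTop

namespace IsNorm

variable {n : ℕ} {N : (Fin n → ℝ) → ℝ}

theorem map_zero (hN : IsNorm N) : N 0 = 0 := (hN.2.2 0).2 rfl

theorem map_neg (hN : IsNorm N) (x : Fin n → ℝ) : N (-x) = N x := by
  simpa using hN.2.1 (-1) x

theorem nonneg (hN : IsNorm N) (x : Fin n → ℝ) : 0 ≤ N x := by
  have h := hN.1 x (-x)
  rw [add_neg_cancel, hN.map_zero, hN.map_neg] at h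
  linarith

theorem pos (hN : IsNorm N) {x : Fin n → ℝ} (hx : x ≠ 0) : 0 < N x :=
  (hN.nonneg x).lt_of_ne fun h => hx ((hN.2.2 x).1 h.symm)

theorem sum_le (hN : IsNorm N) {ι : Type*} (s : Finset ι) (f : ι → Fin n → ℝ) :
    N (∑ i ∈ s, f i) ≤ ∑ i ∈ s, N (f i) := by
  classical
  induction s using Finset.induction with
  | empty => simp [hN.map_zero]
  | insert i s hi ih =>
    rw [Finset.sum_insert hi, Finset.sum_insert hi]
    exact (hN.1 _ _).trans (add_le_add_right ih _)

theorem apply_mulVec_le (hN : IsNorm N) (A : Matrix (Fin n) (Fin n) ℝ) (x : Fin n → ℝ) :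
    N (A *ᵥ x) ≤ ‖x‖ * ∑ i, N (A *ᵥ Pi.single i 1) := by
  classical
  have hx : A *ᵥ x = ∑ i, x i • A *ᵥ Pi.single i 1 := by
    conv_lhs => rw [pi_eq_sum_univ' x]
    simp only [Matrix.mulVec_sum, Matrix.mulVec_smul]
  calc N (A *ᵥ x) ≤ ∑ i, N (x i • A *ᵥ Pi.single i 1) := hx ▸ hN.sum_le _ _
    _ = ∑ i, |x i| * N (A *ᵥ Pi.single i 1) := by simp only [hN.2.1]
    _ ≤ ∑ i, ‖x‖ * N (A *ᵥ Pi.single i 1) := by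
      gcongr with i
      · exact hN.nonneg _
      · exact norm_le_pi_norm x i
    _ = ‖x‖ * ∑ i, N (A *ᵥ Pi.single i 1) := Finset.mul_sum .. |>.symm

theorem continuous (hN : IsNorm N) : Continuous N := by
  refine (LipschitzWith.of_le_add_mul' (∑ i, N (Pi.single i 1)) fun x y => ?_).continuous
  have htri : N x ≤ N (x - y) + N y := by simpa using hN.1 (x - y) y
  have hsub : N (x - y) ≤ ‖x - y‖ * ∑ i, N (Pi.single i 1) := by
    simpa only [Matrix.one_mulVec] using hN.apply_mulVec_le 1 (x - y)
  rw [dist_eq_norm]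
  linarith

theorem exists_norm_le_mul (hN : IsNorm N) : ∃ K > 0, ∀ x, ‖x‖ ≤ K * N x := by
  rcases subsingleton_or_nontrivial (Fin n → ℝ) with h | h
  · exact ⟨1, one_pos, fun x => by simp [Subsingleton.elim x 0, hN.map_zero]⟩
  obtain ⟨y, hy, hmin⟩ := (isCompact_sphere (0 : Fin n → ℝ) 1).exists_isMinOn
    (NormedSpace.sphere_nonempty.2 zero_le_one) hN.continuous.continuousOn
  have hNy : 0 < N y := hN.pos (ne_zero_of_mem_unit_sphere ⟨y, hy⟩)
  refine ⟨(N y)⁻¹, inv_pos.2 hNy, fun x => ?_⟩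
  rcases eq_or_ne x 0 with rfl | hx
  · simp [hN.map_zero]
  have hxpos : 0 < ‖x‖ := norm_pos_iff.2 hx
  have hmem : ‖x‖⁻¹ • x ∈ Metric.sphere (0 : Fin n → ℝ) 1 := by
    rw [mem_sphere_zero_iff_norm, norm_smul, norm_inv, norm_norm, inv_mul_cancel₀ hxpos.ne']
  have h : N y ≤ N (‖x‖⁻¹ • x) := hmin hmem
  rw [hN.2.1, abs_inv, abs_norm, le_inv_mul_iff₀ hxpos] at h
  rwa [le_inv_mul_iff₀ hNy, mul_comm]

end IsNorm

section Dilation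

variable {n : ℕ} (G : Matrix (Fin n) (Fin n) ℝ)

theorem dilMat_add (s t : ℝ) : dilMat G (s + t) = dilMat G s * dilMat G t := by
  rw [dilMat, add_smul]
  exact Matrix.exp_add_of_commute _ _ (((Commute.refl G).smul_left s).smul_right t)

theorem dilMat_mulVec_dilMat_neg_mulVec (s : ℝ) (x : Fin n → ℝ) :
    dilMat G s *ᵥ (dilMat G (-s) *ᵥ x) = x := by
  rw [Matrix.mulVec_mulVec, ← dilMat_add, add_neg_cancel, dilMat, zero_smul,
    NormedSpace.exp_zero, Matrix.one_mulVec]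

-- Any of the equivalent matrix norms will do: they all induce the product topology.
attribute [local instance] Matrix.linftyOpNormedRing Matrix.linftyOpNormedAlgebra in
theorem continuous_dilMat : Continuous (dilMat G) :=
  (differentiable_exp_smul_const ℝ G).continuous

theorem continuous_dilMat_mulVec (x : Fin n → ℝ) : Continuous fun s => dilMat G s *ᵥ x :=
  (continuous_dilMat G).matrix_mulVec continuous_const

end Dilation

theorem existsUnique_norm_dilMat_neg_mulVec_eq_one {n : ℕ} {G : Matrix (Fin n) (Fin n) ℝ}
    {N : (Fin n → ℝ) → ℝ} (hN : IsNorm N) (hdil : IsDilation G N)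
    (hmono : IsMonotoneDil G N) {x : Fin n → ℝ} (hx : x ≠ 0) :
    ∃! s : ℝ, N (dilMat G (-s) *ᵥ x) = 1 := by
  obtain ⟨a, ha⟩ := ((hdil x hx).2.eventually_lt_const one_pos).exists
  obtain ⟨b, hb⟩ := ((hdil x hx).1.eventually_gt_atTop 1).exists
  obtain ⟨s, hs⟩ := intermediate_value_univ a b
    (hN.continuous.comp (continuous_dilMat_mulVec G x)) ⟨ha.le, hb.le⟩
  refine ⟨-s, by simpa using hs, fun t ht => ?_⟩
  rw [eq_neg_iff_add_eq_zero, ← neg_eq_iff_add_eq_zero]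
  exact (hmono x hx).injective (ht.trans hs.symm)

theorem StrictMono.pos_of_tendsto_atBot_zero {α : Type*} [LinearOrder α] [NoMinOrder α]
    {φ : α → ℝ} (hφ : StrictMono φ) (hbot : Tendsto φ atBot (𝓝 0)) (t : α) :
    0 < φ t := by
  obtain ⟨s, hs⟩ := exists_lt t
  have : Nonempty α := ⟨t⟩
  have hs0 : 0 ≤ φ s :=
    le_of_tendsto hbot (eventually_atBot.2 ⟨s, fun _ hu => hφ.monotone hu⟩)
  exact hs0.trans_lt (hφ hs)

theorem isClassKInf_comp_log {φ : ℝ → ℝ} (hc : Continuous φ) (hm : StrictMono φ)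
    (hbot : Tendsto φ atBot (𝓝 0)) (htop : Tendsto φ atTop atTop) :
    IsClassKInf fun r => if 0 < r then φ (Real.log r) else 0 := by
  set σ : ℝ → ℝ := fun r => if 0 < r then φ (Real.log r) else 0
  have hσ : EqOn σ (φ ∘ Real.log) (Ioi 0) := fun r hr => if_pos hr
  have hσ0 : σ 0 = 0 := if_neg (lt_irrefl 0)
  refine ⟨fun r hr => ?_, fun a ha b hb hab => ?_, hσ0, ?_⟩
  · rcases (mem_Ici.1 hr).eq_or_lt with rfl | hr
    · rw [← continuousWithinAt_Ioi_iff_Ici, ContinuousWithinAt, hσ0]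
      exact ((hbot.comp Real.tendsto_log_nhdsGT_zero).congr' (eventually_nhdsWithin_of_forall
        fun r hr => (hσ hr).symm))
    · exact ((hc.comp_continuousOn (Real.continuousOn_log.mono fun r hr => hr.ne')).congr
        hσ).continuousAt (Ioi_mem_nhds hr) |>.continuousWithinAt
  · rcases (mem_Ici.1 ha).eq_or_lt with rfl | ha
    · rw [hσ0, hσ (hab : 0 < b)]
      exact hm.pos_of_tendsto_atBot_zero hbot _
    · rw [hσ ha, hσ (ha.trans hab)]
      exact hm (Real.log_lt_log ha hab)
  · exact (htop.comp Real.tendsto_log_atTop).congr' (eventually_gt_atTop 0 |>.mono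
      fun r hr => (hσ hr).symm)

noncomputable def dilGrowth {n : ℕ} (G : Matrix (Fin n) (Fin n) ℝ) (N : (Fin n → ℝ) → ℝ)
    (t : ℝ) : ℝ :=
  ∑ i, N (dilMat G t *ᵥ Pi.single i 1)

section DilGrowth

variable {n : ℕ} {G : Matrix (Fin n) (Fin n) ℝ} {N : (Fin n → ℝ) → ℝ}

theorem IsNorm.apply_dilMat_mulVec_le (hN : IsNorm N) (t : ℝ) (x : Fin n → ℝ) :
    N (dilMat G t *ᵥ x) ≤ ‖x‖ * dilGrowth G N t :=
  hN.apply_mulVec_le _ x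

theorem dilGrowth_nonneg (hN : IsNorm N) (t : ℝ) : 0 ≤ dilGrowth G N t :=
  Finset.sum_nonneg fun _ _ => hN.nonneg _

theorem continuous_dilGrowth (hN : IsNorm N) : Continuous (dilGrowth G N) :=
  continuous_finsetSum _ fun _ _ => hN.continuous.comp (continuous_dilMat_mulVec G _)

theorem tendsto_dilGrowth_atBot (hdil : IsDilation G N) :
    Tendsto (dilGrowth G N) atBot (𝓝 0) := by
  rw [← Finset.sum_const_zero (s := Finset.univ (α := Fin n))]
  exact tendsto_finsetSum _ fun _ _ => (hdil _ (Pi.single_ne_zero_iff.2 one_ne_zero)).2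

variable [NeZero n]

theorem strictMono_dilGrowth (hmono : IsMonotoneDil G N) : StrictMono (dilGrowth G N) :=
  fun _ _ hst => Finset.sum_lt_sum_of_nonempty Finset.univ_nonempty fun _ _ =>
    hmono _ (Pi.single_ne_zero_iff.2 one_ne_zero) hst

theorem tendsto_dilGrowth_atTop (hN : IsNorm N) (hdil : IsDilation G N) :
    Tendsto (dilGrowth G N) atTop atTop :=
  tendsto_atTop_mono
    (fun t => Finset.single_le_sum (f := fun i => N (dilMat G t *ᵥ Pi.single i 1))
      (fun _ _ => hN.nonneg _) (Finset.mem_univ 0))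
    (hdil _ (Pi.single_ne_zero_iff.2 one_ne_zero)).1

theorem isClassKInf_mul_dilGrowth_log (hN : IsNorm N) (hdil : IsDilation G N)
    (hmono : IsMonotoneDil G N) {K : ℝ} (hK : 0 < K) :
    IsClassKInf fun r => if 0 < r then K * dilGrowth G N (Real.log r) else 0 := by
  refine isClassKInf_comp_log (φ := fun t => K * dilGrowth G N t)
    (continuous_const.mul (continuous_dilGrowth hN))
    (fun _ _ hst => mul_lt_mul_of_pos_left (strictMono_dilGrowth hmono hst) hK) ?_
    ((tendsto_dilGrowth_atTop hN hdil).const_mul_atTop hK)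
  simpa using (tendsto_dilGrowth_atBot hdil).const_mul K

theorem isClassKInf_inv_mul_dilGrowth_neg_log (hN : IsNorm N) (hdil : IsDilation G N)
    (hmono : IsMonotoneDil G N) {K : ℝ} (hK : 0 < K) :
    IsClassKInf fun r => if 0 < r then (K * dilGrowth G N (-Real.log r))⁻¹ else 0 := by
  have hpos (t : ℝ) : 0 < K * dilGrowth G N (-t) :=
    mul_pos hK ((strictMono_dilGrowth hmono).pos_of_tendsto_atBot_zero
      (tendsto_dilGrowth_atBot hdil) _)
  refine isClassKInf_comp_log ?_ (fun _ _ hst => inv_strictAnti₀ (hpos _)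
    (mul_lt_mul_of_pos_left (strictMono_dilGrowth hmono (neg_lt_neg hst)) hK)) ?_ ?_
  · exact (continuous_const.mul ((continuous_dilGrowth hN).comp continuous_neg)).inv₀
      fun t => (hpos t).ne'
  · exact (((tendsto_dilGrowth_atTop hN hdil).comp tendsto_neg_atBot_atTop).const_mul_atTop
      hK).inv_tendsto_atTop
  · refine Tendsto.inv_tendsto_nhdsGT_zero (tendsto_nhdsWithin_of_tendsto_nhds_of_eventually_within
      _ ?_ (Eventually.of_forall hpos))
    simpa using ((tendsto_dilGrowth_atBot hdil).comp tendsto_neg_atTop_atBot).const_mul K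

end DilGrowth

def IsCanonicalHomNorm {n : ℕ} (G : Matrix (Fin n) (Fin n) ℝ) (N : (Fin n → ℝ) → ℝ)
    (hd : (Fin n → ℝ) → ℝ) : Prop :=
  hd 0 = 0 ∧
    ∀ x : Fin n → ℝ, x ≠ 0 → 0 < hd x ∧ N (dilMat G (-Real.log (hd x)) *ᵥ x) = 1

namespace IsCanonicalHomNorm

variable {n : ℕ} {G : Matrix (Fin n) (Fin n) ℝ} {N : (Fin n → ℝ) → ℝ}
  {hd : (Fin n → ℝ) → ℝ} {K : ℝ}

theorem lt_exp_iff (hN : IsNorm N) (hmono : IsMonotoneDil G N) (hhd : IsCanonicalHomNorm G N hd)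
    (x : Fin n → ℝ) (t : ℝ) : hd x < Real.exp t ↔ N (dilMat G (-t) *ᵥ x) < 1 := by
  rcases eq_or_ne x 0 with rfl | hx
  · simp [hhd.1, hN.map_zero, Real.exp_pos]
  rw [← Real.log_lt_iff_lt_exp (hhd.2 x hx).1, ← (hhd.2 x hx).2, (hmono x hx).lt_iff_lt,
    neg_lt_neg_iff]

theorem exp_lt_iff (hN : IsNorm N) (hmono : IsMonotoneDil G N) (hhd : IsCanonicalHomNorm G N hd)
    (x : Fin n → ℝ) (t : ℝ) : Real.exp t < hd x ↔ 1 < N (dilMat G (-t) *ᵥ x) := by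
  rcases eq_or_ne x 0 with rfl | hx
  · simp only [hhd.1, Matrix.mulVec_zero, hN.map_zero]
    exact iff_of_false (Real.exp_pos t).asymm one_pos.asymm
  rw [← Real.lt_log_iff_exp_lt (hhd.2 x hx).1, ← (hhd.2 x hx).2, (hmono x hx).lt_iff_lt,
    neg_lt_neg_iff]

theorem nonneg (hhd : IsCanonicalHomNorm G N hd) (x : Fin n → ℝ) : 0 ≤ hd x := by
  rcases eq_or_ne x 0 with rfl | hx
  · exact hhd.1.ge
  · exact (hhd.2 x hx).1.le

theorem continuous (hN : IsNorm N) (hmono : IsMonotoneDil G N)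
    (hhd : IsCanonicalHomNorm G N hd) : Continuous hd := by
  have hlevel (t : ℝ) : Continuous fun x => N (dilMat G (-t) *ᵥ x) :=
    hN.continuous.comp (continuous_const.matrix_mulVec continuous_id)
  refine continuous_iff_continuousAt.2 fun x₀ =>
    tendsto_order.2 ⟨fun a ha => ?_, fun a ha => ?_⟩
  · rcases lt_or_ge a 0 with ha0 | ha0
    · exact Eventually.of_forall fun x => ha0.trans_le (hhd.nonneg x)
    obtain ⟨c, hac, hc⟩ := exists_between ha
    have hc0 : 0 < c := ha0.trans_lt hac
    rw [← Real.exp_log hc0, hhd.exp_lt_iff hN hmono] at hc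
    filter_upwards [(hlevel _).continuousAt.eventually_const_lt hc] with x hx
    rw [← hhd.exp_lt_iff hN hmono, Real.exp_log hc0] at hx
    exact hac.trans hx
  · have ha0 : 0 < a := (hhd.nonneg x₀).trans_lt ha
    replace ha : hd x₀ < Real.exp (Real.log a) := by rwa [Real.exp_log ha0]
    rw [hhd.lt_exp_iff hN hmono] at ha
    filter_upwards [(hlevel _).continuousAt.eventually_lt_const ha] with x hx
    rwa [← hhd.lt_exp_iff hN hmono, Real.exp_log ha0] at hx

theorem apply_le_mul_dilGrowth_log (hN : IsNorm N) (hhd : IsCanonicalHomNorm G N hd)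
    (hK : ∀ y, ‖y‖ ≤ K * N y) {x : Fin n → ℝ} (hx : x ≠ 0) :
    N x ≤ K * dilGrowth G N (Real.log (hd x)) := by
  set s := Real.log (hd x)
  calc N x = N (dilMat G s *ᵥ (dilMat G (-s) *ᵥ x)) := by
        rw [dilMat_mulVec_dilMat_neg_mulVec]
    _ ≤ ‖dilMat G (-s) *ᵥ x‖ * dilGrowth G N s := hN.apply_dilMat_mulVec_le _ _
    _ ≤ K * N (dilMat G (-s) *ᵥ x) * dilGrowth G N s := by
        gcongr
        · exact dilGrowth_nonneg hN s
        · exact hK _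
    _ = K * dilGrowth G N s := by rw [(hhd.2 x hx).2, mul_one]

theorem inv_mul_dilGrowth_neg_log_le (hN : IsNorm N) (hhd : IsCanonicalHomNorm G N hd)
    (hK : ∀ y, ‖y‖ ≤ K * N y) {x : Fin n → ℝ} (hx : x ≠ 0) :
    (K * dilGrowth G N (-Real.log (hd x)))⁻¹ ≤ N x := by
  set s := Real.log (hd x)
  have h : 1 ≤ K * dilGrowth G N (-s) * N x :=
    calc 1 = N (dilMat G (-s) *ᵥ x) := (hhd.2 x hx).2.symm
      _ ≤ ‖x‖ * dilGrowth G N (-s) := hN.apply_dilMat_mulVec_le _ _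
      _ ≤ K * N x * dilGrowth G N (-s) := by
          gcongr
          · exact dilGrowth_nonneg hN _
          · exact hK x
      _ = K * dilGrowth G N (-s) * N x := by ring
  exact (inv_le_iff_one_le_mul₀' (pos_of_mul_pos_left (one_pos.trans_le h) (hN.nonneg x))).2 h

theorem exists_classKInf_bounds (hN : IsNorm N) (hdil : IsDilation G N)
    (hmono : IsMonotoneDil G N) (hhd : IsCanonicalHomNorm G N hd) :
    ∃ σ₁ σ₂ : ℝ → ℝ, IsClassKInf σ₁ ∧ IsClassKInf σ₂ ∧
      ∀ x : Fin n → ℝ, σ₁ (hd x) ≤ N x ∧ N x ≤ σ₂ (hd x) := by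
  rcases Nat.eq_zero_or_pos n with rfl | hn
  · have hid : IsClassKInf id :=
      ⟨continuousOn_id, strictMono_id.strictMonoOn _, rfl, tendsto_id⟩
    exact ⟨id, id, hid, hid, fun x => by
      rw [Subsingleton.elim x 0, hhd.1, hN.map_zero]; exact ⟨le_rfl, le_rfl⟩⟩
  have : NeZero n := ⟨hn.ne'⟩
  obtain ⟨K, hK, hKN⟩ := hN.exists_norm_le_mul
  refine ⟨_, _, isClassKInf_inv_mul_dilGrowth_neg_log hN hdil hmono hK,
    isClassKInf_mul_dilGrowth_log hN hdil hmono hK, fun x => ?_⟩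
  rcases eq_or_ne x 0 with rfl | hx
  · simp [hhd.1, hN.map_zero]
  simp only [if_pos (hhd.2 x hx).1]
  exact ⟨hhd.inv_mul_dilGrowth_neg_log_le hN hKN hx, hhd.apply_le_mul_dilGrowth_log hN hKN hx⟩

end IsCanonicalHomNorm

/-- for a monotone linear continuous dilation, the canonical homogeneous norm
is well defined (unique `s_x` with `‖d(-s_x)x‖ = 1`), continuous, and bounded above and
below by class `K_∞` functions of the original norm. -/
theorem stmt1 {n : ℕ} (G : Matrix (Fin n) (Fin n) ℝ) (N : (Fin n → ℝ) → ℝ)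
    (hN : IsNorm N) (hdil : IsDilation G N) (hmono : IsMonotoneDil G N) :
    (∀ x : Fin n → ℝ, x ≠ 0 → ∃! s : ℝ, N (dilMat G (-s) *ᵥ x) = 1) ∧
    (∀ hd : (Fin n → ℝ) → ℝ, hd 0 = 0 →
      (∀ x : Fin n → ℝ, x ≠ 0 → 0 < hd x ∧ N (dilMat G (-Real.log (hd x)) *ᵥ x) = 1) →
      Continuous hd ∧
      ∃ σ₁ σ₂ : ℝ → ℝ, IsClassKInf σ₁ ∧ IsClassKInf σ₂ ∧
        ∀ x : Fin n → ℝ, σ₁ (hd x) ≤ N x ∧ N x ≤ σ₂ (hd x)) := by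
  refine ⟨fun x hx => existsUnique_norm_dilMat_neg_mulVec_eq_one hN hdil hmono hx,
    fun hd hd0 hdx => ?_⟩
  have hhd : IsCanonicalHomNorm G N hd := ⟨hd0, hdx⟩
  exact ⟨hhd.continuous hN hmono, hhd.exists_classKInf_bounds hN hdil hmono⟩
end

section
/- Let H ∈ ℝ^{n×n} be invertible, G₀ ∈ ℝ^{n×n} be such that H·(−G₀)·H^{−1} is a Metzler matrix, and let μ ∈ [−1, 0), G_d = I_n + μ·G₀. Let P ∈ ℝ^{n×n} be symmetric positive definite with P·G_d + G_dᵀ·P ≻ 0, let ‖x‖ = √(xᵀPx), d(s) = exp(s·G_d), and let ‖·‖_d be the canonical homogeneous norm. Define Ψ(x) = ‖x‖_d·d(−ln‖x‖_d)·x for x ≠ 0 and Ψ(0) = 0, and the cones Ω_lin = {x : all components of H·Ψ(x) are ≥ 0} and Ω̃_lin = {x : all components of H·x are ≥ 0}. Then, with B = {x : ‖x‖ ≤ 1} the closed unit ball, (Ω̃_lin ∩ B) ⊆ (Ω_lin ∩ B). In particular, for s ≤ 0 and μ·s ≥ 0, every entry of the matrix e^{s}·H·d(−s)·H^{−1} =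 exp(−s·μ·H·G₀·H^{−1}) is nonnegative. -/
/-!
With `G_d = 1 + μ G₀` one has `e^s H d(-s) H⁻¹ = exp (-sμ · H G₀ H⁻¹)`, and for `sμ ≥ 0` this is
the exponential of a Metzler matrix, hence entrywise nonnegative. Since `P G_d + G_dᵀ P ≻ 0`, the
quadratic form `‖d(-s) x‖²` is strictly decreasing in `s`, so a point of the unit ball has
`‖x‖_d ≤ 1`, i.e. `s = ln ‖x‖_d ≤ 0` and `μ s ≥ 0`. Finally `H Ψ(x) = (e^s H d(-s) H⁻¹) (H x)` is a
nonnegative matrix applied to a nonnegative vector.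
-/

open Matrix Filter Topology Set

/-- The weighted Euclidean norm `‖x‖ = √(xᵀ P x)`. -/
noncomputable def normP {n : ℕ} (P : Matrix (Fin n) (Fin n) ℝ) (x : Fin n → ℝ) : ℝ :=
  Real.sqrt (x ⬝ᵥ (P *ᵥ x))

/-- `hd` is the canonical homogeneous norm induced by the norm `N`. -/
def IsCanonHomNorm {n : ℕ} (G : Matrix (Fin n) (Fin n) ℝ) (N : (Fin n → ℝ) → ℝ)
    (hd : (Fin n → ℝ) → ℝ) : Prop :=
  hd 0 = 0 ∧ ∀ x : Fin n → ℝ, x ≠ 0 →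
    0 < hd x ∧ N (dilMat G (-Real.log (hd x)) *ᵥ x) = 1

open NormedSpace

namespace Matrix

section

attribute [local instance] Matrix.linftyOpNormedRing Matrix.linftyOpNormedAlgebra

variable {ι : Type*} [Fintype ι] [DecidableEq ι]

theorem exp_smul_one (c : ℝ) : exp (c • (1 : Matrix ι ι ℝ)) = Real.exp c • 1 := by
  rw [← Algebra.algebraMap_eq_smul_one, ← Algebra.algebraMap_eq_smul_one, Real.exp_eq_exp_ℝ]
  exact (algebraMap_exp_comm c).symm

theorem exp_smul_one_add (c : ℝ) (A : Matrix ι ι ℝ) :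
    exp (c • 1 + A) = Real.exp c • exp A := by
  rw [exp_add_of_commute _ _ ((Commute.one_left A).smul_left c), exp_smul_one, smul_mul,
    one_mul]

theorem exp_apply_nonneg_of_nonneg {M : Matrix ι ι ℝ} (hM : ∀ i j, 0 ≤ M i j) (i j : ι) :
    0 ≤ exp M i j :=
  ((exp_series_hasSum_exp' (𝕂 := ℝ) M).map (entryAddMonoidHom ℝ i j)
    (continuous_id.matrix_elem i j)).nonneg
    fun k => mul_nonneg (by positivity) (pow_apply_nonneg hM k i j)

/-- Shifting a Metzler matrix by `c • 1` makes it nonnegative and only rescales its exponential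
by `Real.exp (-c)`. -/
theorem exp_apply_nonneg_of_offDiag_nonneg {M : Matrix ι ι ℝ}
    (hM : ∀ i j, i ≠ j → 0 ≤ M i j) (i j : ι) : 0 ≤ exp M i j := by
  set c := ∑ l, |M l l|
  have hshift : ∀ a b, 0 ≤ (M + c • 1) a b := by
    intro a b
    rcases eq_or_ne a b with rfl | hab
    · have hc : |M a a| ≤ c :=
        Finset.single_le_sum (f := fun l => |M l l|) (fun _ _ => abs_nonneg _) (Finset.mem_univ a)
      simp only [add_apply, smul_apply, one_apply_eq, smul_eq_mul, mul_one]
      linarith [neg_abs_le (M a a)]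
    · simpa [one_apply_ne hab] using hM a b hab
  have hM : M = (-c) • 1 + (M + c • 1) := by rw [neg_smul]; abel
  rw [hM, exp_smul_one_add, smul_apply, smul_eq_mul]
  exact mul_nonneg (Real.exp_nonneg _) (exp_apply_nonneg_of_nonneg hshift i j)

end

end Matrix

theorem HasDerivAt.dotProduct {ι : Type*} [Fintype ι] {f g : ℝ → ι → ℝ} {f' g' : ι → ℝ}
    {t : ℝ} (hf : HasDerivAt f f' t) (hg : HasDerivAt g g' t) :
    HasDerivAt (fun s => f s ⬝ᵥ g s) (f' ⬝ᵥ g t + f t ⬝ᵥ g') t := by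
  have h := HasDerivAt.fun_sum (u := Finset.univ) fun i _ =>
    (hasDerivAt_pi.1 hf i).mul (hasDerivAt_pi.1 hg i)
  rwa [Finset.sum_add_distrib] at h

section Dilation

variable {n : ℕ}

theorem dilMat_one_add_smul (μ : ℝ) (G₀ : Matrix (Fin n) (Fin n) ℝ) (s : ℝ) :
    dilMat (1 + μ • G₀) s = Real.exp s • exp ((s * μ) • G₀) := by
  rw [dilMat, smul_add, smul_smul, Matrix.exp_smul_one_add]

theorem exp_smul_conj_dilMat_one_add_smul {H : Matrix (Fin n) (Fin n) ℝ} (hH : IsUnit H.det)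
    (μ : ℝ) (G₀ : Matrix (Fin n) (Fin n) ℝ) (s : ℝ) :
    Real.exp s • (H * dilMat (1 + μ • G₀) (-s) * H⁻¹) =
      exp ((-(s * μ)) • (H * G₀ * H⁻¹)) := by
  rw [dilMat_one_add_smul, Matrix.mul_smul, Matrix.smul_mul, smul_smul, ← Real.exp_add,
    add_neg_cancel, Real.exp_zero, one_smul, neg_mul, ← Matrix.smul_mul, ← Matrix.mul_smul,
    Matrix.exp_conj H _ ((Matrix.isUnit_iff_isUnit_det H).mpr hH)]

theorem exp_smul_conj_dilMat_one_add_smul_apply_nonneg {H G₀ : Matrix (Fin n) (Fin n) ℝ}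
    (hH : IsUnit H.det) (hMetzler : ∀ i j, i ≠ j → 0 ≤ (H * (-G₀) * H⁻¹) i j)
    {μ s : ℝ} (hμs : 0 ≤ μ * s) (i j : Fin n) :
    0 ≤ (Real.exp s • (H * dilMat (1 + μ • G₀) (-s) * H⁻¹) : Matrix (Fin n) (Fin n) ℝ) i j := by
  rw [exp_smul_conj_dilMat_one_add_smul hH]
  refine Matrix.exp_apply_nonneg_of_offDiag_nonneg (fun a b hab => ?_) i j
  have h := hMetzler a b hab
  rw [Matrix.mul_neg, Matrix.neg_mul, Matrix.neg_apply] at h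
  rw [Matrix.smul_apply, smul_eq_mul, neg_mul_comm, mul_comm s]
  exact mul_nonneg hμs h

section

attribute [local instance] Matrix.linftyOpNormedRing Matrix.linftyOpNormedAlgebra

theorem hasDerivAt_dilMat_neg_mulVec (G : Matrix (Fin n) (Fin n) ℝ) (x : Fin n → ℝ) (s : ℝ) :
    HasDerivAt (fun t => dilMat G (-t) *ᵥ x) (-(G *ᵥ (dilMat G (-s) *ᵥ x))) s := by
  have hexp : HasDerivAt (fun t => dilMat G (-t)) (-(G * dilMat G (-s))) s := by
    have h := (hasDerivAt_exp_smul_const' (𝕂 := ℝ) G (-s)).scomp s (hasDerivAt_neg s)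
    rwa [neg_one_smul] at h
  let L : Matrix (Fin n) (Fin n) ℝ →L[ℝ] (Fin n → ℝ) :=
    ((LinearMap.applyₗ x).comp (Matrix.toLin' : _ ≃ₗ[ℝ] _).toLinearMap).toContinuousLinearMap
  refine (L.hasFDerivAt.comp_hasDerivAt s hexp).congr_deriv ?_
  change (-(G * dilMat G (-s))) *ᵥ x = _
  rw [Matrix.neg_mulVec, Matrix.mulVec_mulVec]

end

theorem hasDerivAt_dotProduct_mulVec_dilMat_neg (P G : Matrix (Fin n) (Fin n) ℝ)
    (x : Fin n → ℝ) (s : ℝ) :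
    HasDerivAt (fun t => (dilMat G (-t) *ᵥ x) ⬝ᵥ (P *ᵥ (dilMat G (-t) *ᵥ x)))
      (-((dilMat G (-s) *ᵥ x) ⬝ᵥ ((P * G + Gᵀ * P) *ᵥ (dilMat G (-s) *ᵥ x)))) s := by
  have hy := hasDerivAt_dilMat_neg_mulVec G x s
  have hPy : HasDerivAt (fun t => P *ᵥ (dilMat G (-t) *ᵥ x))
      (P *ᵥ -(G *ᵥ (dilMat G (-s) *ᵥ x))) s :=
    (Matrix.toLin' P).toContinuousLinearMap.hasFDerivAt.comp_hasDerivAt s hy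
  refine (hy.dotProduct hPy).congr_deriv ?_
  generalize dilMat G (-s) *ᵥ x = y
  rw [Matrix.add_mulVec, ← Matrix.mulVec_mulVec, ← Matrix.mulVec_mulVec, Matrix.mulVec_neg,
    neg_dotProduct, dotProduct_neg, dotProduct_add, Matrix.dotProduct_mulVec y Gᵀ,
    Matrix.vecMul_transpose]
  ring

theorem strictAnti_dotProduct_mulVec_dilMat_neg {P G : Matrix (Fin n) (Fin n) ℝ}
    (hPG : (P * G + Gᵀ * P).PosDef) {x : Fin n → ℝ} (hx : x ≠ 0) :
    StrictAnti fun t => (dilMat G (-t) *ᵥ x) ⬝ᵥ (P *ᵥ (dilMat G (-t) *ᵥ x)) := by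
  refine strictAnti_of_deriv_neg fun s => ?_
  rw [(hasDerivAt_dotProduct_mulVec_dilMat_neg P G x s).deriv, neg_lt_zero]
  have hy : dilMat G (-s) *ᵥ x ≠ 0 := by
    rw [← Matrix.mulVec_zero (dilMat G (-s))]
    exact (Matrix.mulVec_injective_iff_isUnit.2 (Matrix.isUnit_exp ((-s) • G))).ne hx
  simpa using hPG.dotProduct_mulVec_pos hy

theorem IsCanonHomNorm.le_one {G P : Matrix (Fin n) (Fin n) ℝ} (hPG : (P * G + Gᵀ * P).PosDef)
    {hd : (Fin n → ℝ) → ℝ} (hhd : IsCanonHomNorm G (normP P) hd) {x : Fin n → ℝ}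
    (hx : normP P x ≤ 1) : hd x ≤ 1 := by
  rcases eq_or_ne x 0 with rfl | hx0
  · rw [hhd.1]; exact zero_le_one
  obtain ⟨hpos, hunit⟩ := hhd.2 x hx0
  by_contra! hgt
  have hanti := strictAnti_dotProduct_mulVec_dilMat_neg hPG hx0 (Real.log_pos hgt)
  rw [normP, Real.sqrt_eq_one] at hunit
  rw [normP, Real.sqrt_le_one] at hx
  simp only [neg_zero, dilMat, zero_smul, exp_zero, Matrix.one_mulVec] at hanti
  simp only [dilMat] at hunit
  linarith

end Dilation

theorem stmt19_general {n : ℕ} (H G₀ : Matrix (Fin n) (Fin n) ℝ)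
    (hH : IsUnit H.det)
    (hMetzler : ∀ i j : Fin n, i ≠ j → 0 ≤ (H * (-G₀) * H⁻¹) i j)
    (μ : ℝ) (hμ₂ : μ < 0)
    (Gd : Matrix (Fin n) (Fin n) ℝ) (hGd : Gd = 1 + μ • G₀)
    (P : Matrix (Fin n) (Fin n) ℝ)
    (hGdP : (P * Gd + Gdᵀ * P).PosDef)
    (hd : (Fin n → ℝ) → ℝ) (hhd : IsCanonHomNorm Gd (normP P) hd)
    (Ψ : (Fin n → ℝ) → (Fin n → ℝ))
    (hΨ : ∀ x : Fin n → ℝ, Ψ x = hd x • (dilMat Gd (-Real.log (hd x)) *ᵥ x)) :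
    ({x : Fin n → ℝ | ∀ i, 0 ≤ (H *ᵥ x) i} ∩ {x : Fin n → ℝ | normP P x ≤ 1} ⊆
      {x : Fin n → ℝ | ∀ i, 0 ≤ (H *ᵥ Ψ x) i} ∩ {x : Fin n → ℝ | normP P x ≤ 1}) ∧
    (∀ s : ℝ, s ≤ 0 → 0 ≤ μ * s →
      Real.exp s • (H * dilMat Gd (-s) * H⁻¹) =
        NormedSpace.exp ((-(s * μ)) • (H * G₀ * H⁻¹)) ∧
      ∀ i j : Fin n, 0 ≤ (Real.exp s • (H * dilMat Gd (-s) * H⁻¹)) i j) := by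
  subst hGd
  refine ⟨fun x ⟨hHx, hx⟩ => ⟨fun i => ?_, hx⟩, fun s _ hμs =>
    ⟨exp_smul_conj_dilMat_one_add_smul hH μ G₀ s,
      exp_smul_conj_dilMat_one_add_smul_apply_nonneg hH hMetzler hμs⟩⟩
  rcases eq_or_ne x 0 with rfl | hx0
  · simp [hΨ, hhd.1]
  have hpos := (hhd.2 x hx0).1
  set s := Real.log (hd x)
  have hs : s ≤ 0 := Real.log_nonpos hpos.le (hhd.le_one hGdP hx)
  have hΨx : H *ᵥ Ψ x = (Real.exp s • (H * dilMat (1 + μ • G₀) (-s) * H⁻¹)) *ᵥ (H *ᵥ x) := by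
    rw [hΨ, Real.exp_log hpos, Matrix.smul_mulVec, Matrix.mulVec_mulVec, Matrix.mul_assoc _ H⁻¹,
      Matrix.nonsing_inv_mul _ hH, Matrix.mul_one, Matrix.mulVec_smul, Matrix.mulVec_mulVec]
  rw [hΨx, Matrix.mulVec, dotProduct]
  have hμs : 0 ≤ μ * s := mul_nonneg_of_nonpos_of_nonpos hμ₂.le hs
  exact Finset.sum_nonneg fun j _ =>
    mul_nonneg (exp_smul_conj_dilMat_one_add_smul_apply_nonneg hH hMetzler hμs i j) (hHx j)

/-- if `H(−G₀)H⁻¹` is Metzler and `μ ∈ [−1,0)`, then locally (inside the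
unit ball) the linear cone `Ω̃_lin = {x : Hx ≥ 0}` is contained in the `d`-homogeneous
cone `Ω_lin = {x : HΨ(x) ≥ 0}`; in particular for `s ≤ 0` with `μs ≥ 0` the matrix
`e^s H d(−s) H⁻¹ = exp(−sμ·HG₀H⁻¹)` has nonnegative entries. -/
theorem stmt19 {n : ℕ} (H G₀ : Matrix (Fin n) (Fin n) ℝ)
    (hH : IsUnit H.det)
    (hMetzler : ∀ i j : Fin n, i ≠ j → 0 ≤ (H * (-G₀) * H⁻¹) i j)
    (μ : ℝ) (hμ₁ : -1 ≤ μ) (hμ₂ : μ < 0)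
    (Gd : Matrix (Fin n) (Fin n) ℝ) (hGd : Gd = 1 + μ • G₀)
    (P : Matrix (Fin n) (Fin n) ℝ) (hP : P.PosDef)
    (hGdP : (P * Gd + Gdᵀ * P).PosDef)
    (hd : (Fin n → ℝ) → ℝ) (hhd : IsCanonHomNorm Gd (normP P) hd)
    (Ψ : (Fin n → ℝ) → (Fin n → ℝ))
    (hΨ : ∀ x : Fin n → ℝ, Ψ x = hd x • (dilMat Gd (-Real.log (hd x)) *ᵥ x)) :
    ({x : Fin n → ℝ | ∀ i, 0 ≤ (H *ᵥ x) i} ∩ {x : Fin n → ℝ | normP P x ≤ 1} ⊆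
      {x : Fin n → ℝ | ∀ i, 0 ≤ (H *ᵥ Ψ x) i} ∩ {x : Fin n → ℝ | normP P x ≤ 1}) ∧
    (∀ s : ℝ, s ≤ 0 → 0 ≤ μ * s →
      Real.exp s • (H * dilMat Gd (-s) * H⁻¹) =
        NormedSpace.exp ((-(s * μ)) • (H * G₀ * H⁻¹)) ∧
      ∀ i j : Fin n, 0 ≤ (Real.exp s • (H * dilMat Gd (-s) * H⁻¹)) i j) :=
  stmt19_general H G₀ hH hMetzler μ hμ₂ Gd hGd P hGdP hd hhd Ψ hΨ
end
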